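/- Let A be a symmetric positive-semidefinite n×n real matrix, b ∈ ℝⁿ, α ∈ ℝ, f(x) := (1/2)⟨Ax, x⟩ + ⟨b, x⟩ + α, and let g : ℝⁿ → (−∞, +∞] be a proper lower semicontinuous convex function; set φ := f + g. Let γ > 0 be such that B := I − γA is positive-definite, and let x̄ ∈ ℝⁿ satisfy 0 ∈ ∂φ(x̄). Then x̄ is a tilt-stable local minimizer of φ if and only if x̄ is a tilt-stable local minimizer of the forward-backward envelope φ_γ. -/

import Mathlib

open Set Topology RealInnerProductSpace

set_option maxHeartbeats 1000000

/-- Convexity of an extended-real-valued function `g : ℝⁿ → (−∞,∞]`. -/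
def EConvexOn {n : ℕ} (g : EuclideanSpace ℝ (Fin n) → EReal) : Prop :=
  ∀ x y : EuclideanSpace ℝ (Fin n), ∀ t ∈ Set.Icc (0 : ℝ) 1,
    g (t • x + (1 - t) • y) ≤ (t : EReal) * g x + ((1 - t : ℝ) : EReal) * g y

/-- The subdifferential of a convex extended-real-valued function `φ` at `x`
(empty when `φ x = +∞`). -/
def ESubdiff {n : ℕ} (φ : EuclideanSpace ℝ (Fin n) → EReal) (x : EuclideanSpace ℝ (Fin n)) :
    Set (EuclideanSpace ℝ (Fin n)) :=
  {v | φ x ≠ ⊤ ∧ ∀ y, φ x + ((⟪v, y - x⟫ : ℝ) : EReal) ≤ φ y}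

/-- `xbar` is a tilt-stable local minimizer of `φ` with modulus `κ > 0`. -/
def TiltStableWith {n : ℕ} (φ : EuclideanSpace ℝ (Fin n) → EReal)
    (xbar : EuclideanSpace ℝ (Fin n)) (κ : ℝ) : Prop :=
  ∃ γ > (0 : ℝ), ∃ V ∈ 𝓝 (0 : EuclideanSpace ℝ (Fin n)),
    ∃ M : EuclideanSpace ℝ (Fin n) → EuclideanSpace ℝ (Fin n),
      M 0 = xbar ∧ (∀ u ∈ V, ∀ v ∈ V, ‖M u - M v‖ ≤ κ * ‖u - v‖) ∧
      ∀ v ∈ V,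
        {x | ‖x - xbar‖ ≤ γ ∧ ∀ y, ‖y - xbar‖ ≤ γ →
            φ x - ((⟪v, x⟫ : ℝ) : EReal) ≤ φ y - ((⟪v, y⟫ : ℝ) : EReal)} = {M v}

/-- The forward-backward envelope
`φ_γ(x) = inf_y { f(x) + ⟪∇f(x), y − x⟫ + g(y) + ‖y − x‖²/(2γ) }`. -/
noncomputable def fbEnvelope {n : ℕ} (f : EuclideanSpace ℝ (Fin n) → ℝ)
    (g : EuclideanSpace ℝ (Fin n) → EReal) (γ : ℝ) (x : EuclideanSpace ℝ (Fin n)) : EReal :=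
  ⨅ y : EuclideanSpace ℝ (Fin n),
    (((f x + ⟪gradient f x, y - x⟫ + 1 / (2 * γ) * ‖y - x‖ ^ 2 : ℝ)) : EReal) + g y


lemma ereal_exists_real {a : EReal} (hb : a ≠ ⊥) (ht : a ≠ ⊤) : ∃ r : ℝ, a = (r : EReal) := by
  induction a using EReal.rec with
  | bot => exact absurd rfl hb
  | coe r => exact ⟨r, rfl⟩
  | top => exact absurd rfl ht

lemma ereal_sub_coe_ne_top {a : EReal} (ha : a ≠ ⊤) (s : ℝ) : a - (s:ℝ) ≠ ⊤ := by
  induction a using EReal.rec with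
  | bot => simp [show (⊥:EReal) - (s:ℝ) = ⊥ from rfl]
  | coe r => rw [← EReal.coe_sub]; exact EReal.coe_ne_top _
  | top => exact absurd rfl ha

lemma ereal_le_sub_iff {a : EReal} (ha : a ≠ ⊥) (c s : ℝ) :
    (c : EReal) ≤ a - (s:ℝ) ↔ ((c + s : ℝ) : EReal) ≤ a := by
  induction a using EReal.rec with
  | bot => exact absurd rfl ha
  | coe r =>
    rw [show ((r:ℝ):EReal) - (s:ℝ) = ((r - s : ℝ):EReal) from (EReal.coe_sub r s).symm]
    constructor <;> (intro h; rw [EReal.coe_le_coe_iff] at h ⊢; linarith)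
  | top => simp [EReal.top_sub_coe]

lemma ereal_sub_le_iff {a : EReal} (c s : ℝ) :
    a - (s:ℝ) ≤ (c : EReal) ↔ a ≤ ((c + s : ℝ) : EReal) := by
  induction a using EReal.rec with
  | bot => simp [show (⊥:EReal) - (s:ℝ) = ⊥ from rfl]
  | coe r =>
    rw [show ((r:ℝ):EReal) - (s:ℝ) = ((r - s : ℝ):EReal) from (EReal.coe_sub r s).symm]
    constructor <;> (intro h; rw [EReal.coe_le_coe_iff] at h ⊢; linarith)
  | top =>
    simp only [EReal.top_sub_coe]
    simp [← EReal.coe_add]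

variable {n : ℕ}

def GMem (ψ : EuclideanSpace ℝ (Fin n) → EReal) (v x : EuclideanSpace ℝ (Fin n)) : Prop :=
  ∀ y, ψ x - ((⟪v, x⟫ : ℝ) : EReal) ≤ ψ y - ((⟪v, y⟫ : ℝ) : EReal)

def GlobalTilt (ψ : EuclideanSpace ℝ (Fin n) → EReal) (xbar : EuclideanSpace ℝ (Fin n)) (κ : ℝ) : Prop :=
  ∃ V ∈ 𝓝 (0 : EuclideanSpace ℝ (Fin n)),
    ∃ M : EuclideanSpace ℝ (Fin n) → EuclideanSpace ℝ (Fin n),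
      M 0 = xbar ∧ (∀ u ∈ V, ∀ v ∈ V, ‖M u - M v‖ ≤ κ * ‖u - v‖) ∧
      ∀ v ∈ V, {x | GMem ψ v x} = {M v}

theorem global_to_local (ψ : EuclideanSpace ℝ (Fin n) → EReal) (xbar : EuclideanSpace ℝ (Fin n))
    (κ : ℝ) (hκ : 0 < κ) (h : GlobalTilt ψ xbar κ) : TiltStableWith ψ xbar κ := by
  obtain ⟨V, hV, M, hM0, hLip, hset⟩ := h
  refine ⟨1, one_pos, V ∩ Metric.ball 0 (1/(κ+1)), Filter.inter_mem hV
    (Metric.ball_mem_nhds _ (by positivity)), M, hM0, fun u hu v hv => hLip u hu.1 v hv.1, ?_⟩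
  intro v hv
  have h0 : (0 : EuclideanSpace ℝ (Fin n)) ∈ V := mem_of_mem_nhds hV
  have hMv : GMem ψ v (M v) := by
    have h1 : M v ∈ {x | GMem ψ v x} := by rw [hset v hv.1]; rfl
    exact h1
  have hnorm : ‖M v - xbar‖ ≤ 1 := by
    have h2 := hLip v hv.1 0 h0
    rw [hM0] at h2
    have h3 : ‖v - 0‖ < 1/(κ+1) := by simpa [Metric.mem_ball] using hv.2
    have : κ * ‖v - 0‖ ≤ κ * (1/(κ+1)) := mul_le_mul_of_nonneg_left h3.le hκ.le
    have h4 : κ * (1/(κ+1)) ≤ 1 := by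
      rw [mul_one_div, div_le_one (by positivity)]; linarith
    calc ‖M v - xbar‖ ≤ κ * ‖v - 0‖ := h2
      _ ≤ 1 := le_trans this h4
  ext x
  simp only [mem_setOf_eq, mem_singleton_iff]
  constructor
  · rintro ⟨hx1, hx2⟩
    have hx : GMem ψ v x := fun y => le_trans (hx2 (M v) hnorm) (hMv y)
    have : x ∈ {x | GMem ψ v x} := hx
    rw [hset v hv.1] at this
    exact this
  · rintro rfl
    exact ⟨hnorm, fun y _ => hMv y⟩

lemma seg_norm_le {γ a : ℝ} {m xbar y : EuclideanSpace ℝ (Fin n)} (t : ℝ)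
    (hma : ‖m - xbar‖ ≤ a) (haγ : a ≤ γ) (ht0 : 0 ≤ t)
    (ht : t ≤ (γ - a)/(‖y - m‖ + 1)) :
    ‖t • y + (1 - t) • m - xbar‖ ≤ γ := by
  have hid : t • y + (1 - t) • m - xbar = t • (y - m) + (m - xbar) := by module
  rw [hid]
  have h1 : ‖t • (y - m)‖ = t * ‖y - m‖ := by
    rw [norm_smul, Real.norm_eq_abs, abs_of_nonneg ht0]
  have hD : (0:ℝ) ≤ ‖y - m‖ := norm_nonneg _
  have h2 : t * ‖y - m‖ ≤ γ - a := by
    have := mul_le_mul_of_nonneg_right ht hD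
    have h3 : (γ - a)/(‖y - m‖ + 1) * ‖y - m‖ ≤ γ - a := by
      rw [div_mul_eq_mul_div, div_le_iff₀ (by positivity)]
      have hga : 0 ≤ γ - a := by linarith
      nlinarith
    linarith
  calc ‖t • (y - m) + (m - xbar)‖ ≤ ‖t • (y - m)‖ + ‖m - xbar‖ := norm_add_le _ _
    _ ≤ (γ - a) + a := by rw [h1]; exact add_le_add h2 hma
    _ = γ := by ring

theorem local_to_global (ψ : EuclideanSpace ℝ (Fin n) → EReal)
    (hbot : ∀ x, ψ x ≠ ⊥) (hconv : EConvexOn ψ) (xbar : EuclideanSpace ℝ (Fin n))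
    (hfin : ψ xbar ≠ ⊤) (κ : ℝ) (hκ : 0 < κ) (h : TiltStableWith ψ xbar κ) :
    GlobalTilt ψ xbar κ := by
  obtain ⟨γ, hγ, V, hV, M, hM0, hLip, hset⟩ := h
  have h0V : (0 : EuclideanSpace ℝ (Fin n)) ∈ V := mem_of_mem_nhds hV
  set ρ := γ/(κ+1) with hρdef
  have hρ : 0 < ρ := by positivity
  refine ⟨V ∩ Metric.ball 0 ρ, Filter.inter_mem hV (Metric.ball_mem_nhds _ hρ), M, hM0,
    fun u hu v hv => hLip u hu.1 v hv.1, ?_⟩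
  intro v hv
  set m := M v with hmdef
  set a := κ * ‖v‖ with hadef
  have hMa : ‖m - xbar‖ ≤ a := by simpa [hM0] using hLip v hv.1 0 h0V
  have haγ : a < γ := by
    have h1 : ‖v‖ < ρ := by simpa [Metric.mem_ball] using hv.2
    have h2 : a ≤ κ * ρ := mul_le_mul_of_nonneg_left h1.le hκ.le
    have h3 : κ * ρ < γ := by
      rw [hρdef, mul_div_assoc'] 
      rw [div_lt_iff₀ (by positivity)]
      nlinarith
    linarith
  have hloc : m ∈ {x | ‖x - xbar‖ ≤ γ ∧ ∀ y, ‖y - xbar‖ ≤ γ →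
      ψ x - ((⟪v, x⟫ : ℝ) : EReal) ≤ ψ y - ((⟪v, y⟫ : ℝ) : EReal)} := by
    rw [hset v hv.1]; rfl
  obtain ⟨hmball, hmloc⟩ := hloc
  have hxbar_ball : ‖xbar - xbar‖ ≤ γ := by simp [hγ.le]
  -- ψ m is real
  have hmtop : ψ m ≠ ⊤ := by
    intro htop
    have h1 := hmloc xbar hxbar_ball
    rw [htop, EReal.top_sub_coe, top_le_iff] at h1
    exact ereal_sub_coe_ne_top hfin _ h1
  obtain ⟨P, hP⟩ := ereal_exists_real (hbot m) hmtop
  -- M v is a global tilted minimizer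
  have hGMv : GMem ψ v m := by
    intro y
    by_cases hytop : ψ y = ⊤
    · rw [hytop, EReal.top_sub_coe]; exact le_top
    obtain ⟨Y, hY⟩ := ereal_exists_real (hbot y) hytop
    set t := min 1 ((γ - a)/(‖y - m‖ + 1)) with htdef
    have ht0 : 0 < t := lt_min one_pos (div_pos (by linarith) (by positivity))
    have ht1 : t ≤ 1 := min_le_left _ _
    set w := t • y + (1 - t) • m with hwdef
    have hwball : ‖w - xbar‖ ≤ γ := seg_norm_le t hMa haγ.le ht0.le (min_le_right _ _)
    have hconvw : ψ w ≤ ((t * Y + (1 - t) * P : ℝ) : EReal) := by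
      have := hconv y m t ⟨ht0.le, ht1⟩
      rw [hY, hP] at this
      rw [EReal.coe_add, EReal.coe_mul, EReal.coe_mul]
      exact this
    have hinner : (⟪v, w⟫:ℝ) = t * ⟪v, y⟫ + (1 - t) * ⟪v, m⟫ := by
      rw [hwdef, inner_add_right, real_inner_smul_right, real_inner_smul_right]
    have hchain : ψ m - ((⟪v, m⟫:ℝ):EReal) ≤ ((t * Y + (1 - t) * P - ⟪v, w⟫ : ℝ) : EReal) := by
      refine le_trans (hmloc w hwball) ?_
      rw [ereal_sub_le_iff]
      have : (t * Y + (1 - t) * P - ⟪v, w⟫ + ⟪v, w⟫ : ℝ) = t * Y + (1 - t) * P := by ring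
      rw [this]
      exact hconvw
    rw [hP, ← EReal.coe_sub, EReal.coe_le_coe_iff] at hchain
    rw [hP, hY, ← EReal.coe_sub, ← EReal.coe_sub, EReal.coe_le_coe_iff]
    rw [hinner] at hchain
    have hkey : t * (P - ⟪v, m⟫) ≤ t * (Y - ⟪v, y⟫) := by nlinarith [hchain]
    exact le_of_mul_le_mul_left (by linarith [hkey]) ht0
  ext x
  simp only [mem_setOf_eq, mem_singleton_iff]
  constructor
  · intro hx
    -- ψ x real
    have hxtop : ψ x ≠ ⊤ := by
      intro htop
      have h1 := hx xbar
      rw [htop, EReal.top_sub_coe, top_le_iff] at h1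
      exact ereal_sub_coe_ne_top hfin _ h1
    obtain ⟨X, hX⟩ := ereal_exists_real (hbot x) hxtop
    have heq : X - ⟪v, x⟫ = P - ⟪v, m⟫ := by
      have h1 := hx m
      have h2 := hGMv x
      rw [hP, hX, ← EReal.coe_sub, ← EReal.coe_sub, EReal.coe_le_coe_iff] at h1 h2
      linarith
    set t := min 1 ((γ - a)/(‖x - m‖ + 1)) with htdef
    have ht0 : 0 < t := lt_min one_pos (div_pos (by linarith) (by positivity))
    have ht1 : t ≤ 1 := min_le_left _ _
    set w := t • x + (1 - t) • m with hwdef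
    have hwball : ‖w - xbar‖ ≤ γ := seg_norm_le t hMa haγ.le ht0.le (min_le_right _ _)
    have hconvw : ψ w ≤ ((t * X + (1 - t) * P : ℝ) : EReal) := by
      have := hconv x m t ⟨ht0.le, ht1⟩
      rw [hX, hP] at this
      rw [EReal.coe_add, EReal.coe_mul, EReal.coe_mul]
      exact this
    have hinner : (⟪v, w⟫:ℝ) = t * ⟪v, x⟫ + (1 - t) * ⟪v, m⟫ := by
      rw [hwdef, inner_add_right, real_inner_smul_right, real_inner_smul_right]
    have hwmem : w ∈ {z | ‖z - xbar‖ ≤ γ ∧ ∀ y, ‖y - xbar‖ ≤ γ →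
        ψ z - ((⟪v, z⟫ : ℝ) : EReal) ≤ ψ y - ((⟪v, y⟫ : ℝ) : EReal)} := by
      refine ⟨hwball, fun y hy => ?_⟩
      have hwle : ψ w - ((⟪v, w⟫:ℝ):EReal) ≤ ((P - ⟪v, m⟫ : ℝ):EReal) := by
        rw [ereal_sub_le_iff]
        have hre : (P - ⟪v, m⟫ + ⟪v, w⟫ : ℝ) = t * X + (1 - t) * P := by
          rw [hinner]; nlinarith [heq]
        rw [hre]
        exact hconvw
      refine le_trans hwle ?_
      have := hGMv y
      rw [hP, ← EReal.coe_sub] at this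
      exact this
    rw [hset v hv.1] at hwmem
    have hw_eq : w = m := hwmem
    have : t • (x - m) = 0 := by
      have h5 : t • x + (1 - t) • m - m = t • (x - m) := by module
      rw [← h5, ← hwdef, hw_eq, sub_self]
    rcases smul_eq_zero.1 this with h6 | h6
    · exact absurd h6 ht0.ne'
    · rw [sub_eq_zero] at h6; exact h6
  · rintro rfl
    exact hGMv

section main
variable {n : ℕ} (A : EuclideanSpace ℝ (Fin n) →L[ℝ] EuclideanSpace ℝ (Fin n))
  (hsym : ∀ x y, ⟪A x, y⟫ = ⟪x, A y⟫) (γ : ℝ) (hγ : 0 < γ)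

noncomputable def Sb (z w : EuclideanSpace ℝ (Fin n)) : ℝ := ⟪z, w⟫ - γ * ⟪A z, w⟫

omit hsym hγ in
lemma Sb_eval (z w : EuclideanSpace ℝ (Fin n)) : ⟪z - γ • A z, w⟫ = Sb A γ z w := by
  simp only [Sb, inner_sub_left, real_inner_smul_left]

include hsym in
lemma Sb_symm (z w : EuclideanSpace ℝ (Fin n)) : Sb A γ z w = Sb A γ w z := by
  simp only [Sb, hsym z w, real_inner_comm z w, real_inner_comm z (A w)]

omit hγ in
lemma Sb_sub_left (z₁ z₂ w : EuclideanSpace ℝ (Fin n)) :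
    Sb A γ (z₁ - z₂) w = Sb A γ z₁ w - Sb A γ z₂ w := by
  simp only [Sb, inner_sub_left, map_sub]; ring

omit hγ in
lemma Sb_sub_right (z w₁ w₂ : EuclideanSpace ℝ (Fin n)) :
    Sb A γ z (w₁ - w₂) = Sb A γ z w₁ - Sb A γ z w₂ := by
  simp only [Sb, inner_sub_right]; ring

omit hγ in
lemma Sb_smul_left (t : ℝ) (z w : EuclideanSpace ℝ (Fin n)) :
    Sb A γ (t • z) w = t * Sb A γ z w := by
  simp only [Sb, real_inner_smul_left, map_smul]; ring

omit hγ in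
lemma Sb_smul_right (t : ℝ) (z w : EuclideanSpace ℝ (Fin n)) :
    Sb A γ z (t • w) = t * Sb A γ z w := by
  simp only [Sb, real_inner_smul_right]; ring

omit hγ in
lemma Sb_add_left (z₁ z₂ w : EuclideanSpace ℝ (Fin n)) :
    Sb A γ (z₁ + z₂) w = Sb A γ z₁ w + Sb A γ z₂ w := by
  simp only [Sb, inner_add_left, map_add]; ring

omit hγ in
lemma Sb_add_right (z w₁ w₂ : EuclideanSpace ℝ (Fin n)) :
    Sb A γ z (w₁ + w₂) = Sb A γ z w₁ + Sb A γ z w₂ := by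
  simp only [Sb, inner_add_right]; ring

/-- the quadratic form `q`. -/
noncomputable def qf (z : EuclideanSpace ℝ (Fin n)) : ℝ := 1/(2*γ) * Sb A γ z z

include hsym in
lemma qf_sub (z w : EuclideanSpace ℝ (Fin n)) :
    qf A γ (z - w) = qf A γ z - 1/γ * Sb A γ w z + qf A γ w := by
  simp only [qf, Sb_sub_left, Sb_sub_right, Sb_symm A hsym γ w z]
  field_simp
  ring

include hsym in
lemma qf_comb (t : ℝ) (a c : EuclideanSpace ℝ (Fin n)) :
    t * qf A γ a + (1 - t) * qf A γ c - qf A γ (t • a + (1 - t) • c)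
      = t * (1 - t) * qf A γ (a - c) := by
  simp only [qf, Sb_add_left, Sb_add_right, Sb_smul_left, Sb_smul_right, Sb_sub_left,
    Sb_sub_right, Sb_symm A hsym γ a c]
  field_simp
  ring

section posdef
variable (hB : ∀ x : EuclideanSpace ℝ (Fin n), x ≠ 0 → 0 < ⟪x - γ • A x, x⟫)

include hB in
lemma posdef_const : ∃ c > (0:ℝ), ∀ z : EuclideanSpace ℝ (Fin n), c * ‖z‖^2 ≤ Sb A γ z z := by
  by_cases hn : ∃ z : EuclideanSpace ℝ (Fin n), z ≠ 0
  · obtain ⟨z₀, hz₀⟩ := hn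
    have hcont : Continuous (fun z : EuclideanSpace ℝ (Fin n) => Sb A γ z z) := by
      unfold Sb
      exact (continuous_inner.comp (continuous_id.prodMk continuous_id)).sub
        (continuous_const.mul (continuous_inner.comp ((A.continuous).prodMk continuous_id)))
    have hne : (Metric.sphere (0:EuclideanSpace ℝ (Fin n)) 1).Nonempty := by
      refine ⟨(‖z₀‖⁻¹) • z₀, ?_⟩
      simp [norm_smul, inv_mul_cancel₀ (norm_ne_zero_iff.2 hz₀)]
    obtain ⟨u, hu, hmin⟩ := (isCompact_sphere (0:EuclideanSpace ℝ (Fin n)) 1).exists_isMinOn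
      hne hcont.continuousOn
    have hu1 : ‖u‖ = 1 := by simpa using hu
    have hu0 : u ≠ 0 := by intro h; rw [h] at hu1; simp at hu1
    set c := Sb A γ u u with hc
    have hcpos : 0 < c := by rw [hc, ← Sb_eval]; exact hB u hu0
    refine ⟨c, hcpos, fun z => ?_⟩
    by_cases hz : z = 0
    · simp [hz, Sb, inner_zero_right]
    · have hnz : (0:ℝ) < ‖z‖ := norm_pos_iff.2 hz
      have : c ≤ Sb A γ ((‖z‖⁻¹) • z) ((‖z‖⁻¹) • z) := by
        apply hmin
        show _ ∈ Metric.sphere _ _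
        simp [norm_smul, inv_mul_cancel₀ hnz.ne']
      rw [Sb_smul_left, Sb_smul_right] at this
      have h2 : c * ‖z‖^2 ≤ (‖z‖⁻¹ * (‖z‖⁻¹ * Sb A γ z z)) * ‖z‖^2 :=
        mul_le_mul_of_nonneg_right this (by positivity)
      have h3 : ‖z‖⁻¹ * (‖z‖⁻¹ * Sb A γ z z) * ‖z‖^2 = Sb A γ z z := by
        rw [pow_two]; field_simp
      rw [h3] at h2
      exact h2
  · push_neg at hn
    exact ⟨1, one_pos, fun z => by simp [hn z, Sb, inner_zero_right]⟩

include hB in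
lemma exists_zeta : ∃ ζ : EuclideanSpace ℝ (Fin n) →L[ℝ] EuclideanSpace ℝ (Fin n),
    ∀ v, (ζ v) - γ • A (ζ v) = γ • v := by
  set Blm : EuclideanSpace ℝ (Fin n) →ₗ[ℝ] EuclideanSpace ℝ (Fin n) :=
    (LinearMap.id : EuclideanSpace ℝ (Fin n) →ₗ[ℝ] EuclideanSpace ℝ (Fin n)) - γ • A.toLinearMap
    with hBlm
  have hBapp : ∀ x, Blm x = x - γ • A x := fun x => rfl
  have hinj : Function.Injective Blm := by
    intro x y hxy
    by_contra hne
    have hx : x - y ≠ 0 := sub_ne_zero.2 hne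
    have h0 : Blm (x - y) = 0 := by rw [map_sub, hxy, sub_self]
    have := hB (x - y) hx
    rw [show (x-y) - γ • A (x-y) = Blm (x-y) from (hBapp _).symm, h0] at this
    simp [inner_zero_left] at this
  have hsurj : Function.Surjective Blm := (LinearMap.injective_iff_surjective).1 hinj
  set e := LinearEquiv.ofBijective Blm ⟨hinj, hsurj⟩ with he
  set ζlm : EuclideanSpace ℝ (Fin n) →ₗ[ℝ] EuclideanSpace ℝ (Fin n) :=
    γ • (e.symm : EuclideanSpace ℝ (Fin n) →ₗ[ℝ] EuclideanSpace ℝ (Fin n)) with hζlm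
  refine ⟨LinearMap.toContinuousLinearMap ζlm, fun v => ?_⟩
  have happ : (LinearMap.toContinuousLinearMap ζlm) v = γ • (e.symm v) := rfl
  rw [happ]
  have : Blm (γ • (e.symm v)) = γ • Blm (e.symm v) := map_smul _ _ _
  rw [← hBapp, this]
  have : Blm (e.symm v) = v := e.apply_symm_apply v
  rw [this]

end posdef
end main

-- extra EReal helpers
lemma ereal_coe_le_add_coe {a : EReal} (ha : a ≠ ⊥) (r s : ℝ) :
    (r : EReal) ≤ a + (s : ℝ) ↔ ((r - s : ℝ) : EReal) ≤ a := by
  induction a using EReal.rec with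
  | bot => exact absurd rfl ha
  | coe t =>
    rw [← EReal.coe_add, EReal.coe_le_coe_iff, EReal.coe_le_coe_iff]
    constructor <;> intro h <;> linarith
  | top =>
    constructor <;> intro _ <;> [exact le_top; exact le_top]

lemma ereal_coe_add_top (r : ℝ) : (r : EReal) + ⊤ = ⊤ := by
  rw [EReal.add_top_iff_ne_bot]; exact EReal.coe_ne_bot r

lemma ereal_smul_add_coe (t r : ℝ) (ht : 0 ≤ t) {a : EReal} (ha : a ≠ ⊥) :
    (t : EReal) * ((r : ℝ) + a) = ((t * r : ℝ) : EReal) + (t : EReal) * a := by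
  induction a using EReal.rec with
  | bot => exact absurd rfl ha
  | coe u => rw [← EReal.coe_add, ← EReal.coe_mul, ← EReal.coe_mul, ← EReal.coe_add]; ring_nf
  | top =>
    rcases eq_or_lt_of_le ht with h0 | h0
    · rw [← h0]; simp
    · rw [ereal_coe_add_top, EReal.coe_mul_top_of_pos h0, ereal_coe_add_top]

lemma gradient_quadratic {n : ℕ} (A : EuclideanSpace ℝ (Fin n) →L[ℝ] EuclideanSpace ℝ (Fin n))
    (hsym : ∀ x y, ⟪A x, y⟫ = ⟪x, A y⟫) (b : EuclideanSpace ℝ (Fin n)) (α : ℝ)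
    (x : EuclideanSpace ℝ (Fin n)) :
    gradient (fun z => 1 / 2 * ⟪A z, z⟫ + ⟪b, z⟫ + α) x = A x + b := by
  have h1 : HasFDerivAt (fun z : EuclideanSpace ℝ (Fin n) => (⟪A z, z⟫ : ℝ))
      ((fderivInnerCLM ℝ (A x, x)).comp ((A.prod (ContinuousLinearMap.id ℝ _)))) x :=
    HasFDerivAt.inner ℝ (A.hasFDerivAt) (hasFDerivAt_id x)
  have h2 : HasFDerivAt (fun z : EuclideanSpace ℝ (Fin n) => (1/2 : ℝ) * ⟪A z, z⟫)
      ((1/2 : ℝ) • ((fderivInnerCLM ℝ (A x, x)).comp ((A.prod (ContinuousLinearMap.id ℝ _))))) x := by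
    exact h1.const_smul (1/2 : ℝ)
  have h3 : HasFDerivAt (fun z : EuclideanSpace ℝ (Fin n) => (⟪b, z⟫ : ℝ)) (innerSL ℝ b) x :=
    (innerSL ℝ b).hasFDerivAt
  have h4 : HasFDerivAt (fun z : EuclideanSpace ℝ (Fin n) => 1/2 * ⟪A z, z⟫ + ⟪b, z⟫ + α)
      ((1/2 : ℝ) • ((fderivInnerCLM ℝ (A x, x)).comp ((A.prod (ContinuousLinearMap.id ℝ _))))
        + innerSL ℝ b) x := (h2.add h3).add_const α
  have h5 := h4.hasGradientAt.gradient
  rw [h5]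
  have hinj : Function.Injective (InnerProductSpace.toDual ℝ (EuclideanSpace ℝ (Fin n))) :=
    (InnerProductSpace.toDual ℝ (EuclideanSpace ℝ (Fin n))).injective
  apply hinj
  rw [LinearIsometryEquiv.apply_symm_apply]
  ext h
  simp only [InnerProductSpace.toDual_apply_apply, ContinuousLinearMap.add_apply,
    ContinuousLinearMap.smul_apply, ContinuousLinearMap.comp_apply,
    ContinuousLinearMap.prod_apply, ContinuousLinearMap.id_apply, fderivInnerCLM_apply,
    innerSL_apply_apply, smul_eq_mul, inner_add_left]
  rw [hsym h x, real_inner_comm h (A x)]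
  ring

section core
variable {n : ℕ}

noncomputable def fq (A : EuclideanSpace ℝ (Fin n) →L[ℝ] EuclideanSpace ℝ (Fin n))
    (b : EuclideanSpace ℝ (Fin n)) (α : ℝ) (z : EuclideanSpace ℝ (Fin n)) : ℝ :=
  1 / 2 * ⟪A z, z⟫ + ⟪b, z⟫ + α

noncomputable def ephi (A : EuclideanSpace ℝ (Fin n) →L[ℝ] EuclideanSpace ℝ (Fin n))
    (b : EuclideanSpace ℝ (Fin n)) (α : ℝ) (g : EuclideanSpace ℝ (Fin n) → EReal)
    (x : EuclideanSpace ℝ (Fin n)) : EReal :=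
  ((fq A b α x : ℝ) : EReal) + g x

noncomputable def env (A : EuclideanSpace ℝ (Fin n) →L[ℝ] EuclideanSpace ℝ (Fin n))
    (b : EuclideanSpace ℝ (Fin n)) (α : ℝ) (g : EuclideanSpace ℝ (Fin n) → EReal) (γ : ℝ)
    (x : EuclideanSpace ℝ (Fin n)) : EReal :=
  ⨅ y : EuclideanSpace ℝ (Fin n), ((fq A b α y + qf A γ (y - x) : ℝ) : EReal) + g y

variable (A : EuclideanSpace ℝ (Fin n) →L[ℝ] EuclideanSpace ℝ (Fin n))
  (b : EuclideanSpace ℝ (Fin n)) (α : ℝ) (g : EuclideanSpace ℝ (Fin n) → EReal) (γ : ℝ)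

lemma fb_term (hγ : 0 < γ) (hsym : ∀ x y, ⟪A x, y⟫ = ⟪x, A y⟫) (x y : EuclideanSpace ℝ (Fin n)) :
    fq A b α x + ⟪A x + b, y - x⟫ + 1 / (2 * γ) * ‖y - x‖ ^ 2
      = fq A b α y + qf A γ (y - x) := by
  have e1 : ‖y - x‖ ^ 2 = ⟪y - x, y - x⟫ := (real_inner_self_eq_norm_sq _).symm
  have e2 : ⟪A y, x⟫ = ⟪A x, y⟫ := by exact (hsym y x).trans (real_inner_comm y (A x)).symm
  have hγ' : γ ≠ 0 := hγ.ne'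
  simp only [fq, qf, Sb, e1, inner_add_left, inner_sub_left, inner_sub_right, map_sub]
  rw [e2]
  field_simp
  ring

lemma fbEnvelope_eq_env (hγ : 0 < γ) (hsym : ∀ x y, ⟪A x, y⟫ = ⟪x, A y⟫) :
    fbEnvelope (fun z => 1 / 2 * ⟪A z, z⟫ + ⟪b, z⟫ + α) g γ = env A b α g γ := by
  funext x
  unfold fbEnvelope env
  apply iInf_congr
  intro y
  congr 1
  rw [gradient_quadratic A hsym b α x]
  exact_mod_cast congrArg (fun r : ℝ => ((r : ℝ) : EReal)) (fb_term A b α γ hγ hsym x y)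

lemma fq_convex (hsym : ∀ x y, ⟪A x, y⟫ = ⟪x, A y⟫) (hpsd : ∀ x, 0 ≤ ⟪A x, x⟫)
    (x y : EuclideanSpace ℝ (Fin n)) (t : ℝ) (ht : t ∈ Set.Icc (0:ℝ) 1) :
    fq A b α (t • x + (1 - t) • y) ≤ t * fq A b α x + (1 - t) * fq A b α y := by
  have e2 : ⟪A y, x⟫ = ⟪A x, y⟫ := by exact (hsym y x).trans (real_inner_comm y (A x)).symm
  have key : t * fq A b α x + (1 - t) * fq A b α y - fq A b α (t • x + (1 - t) • y)
      = 1 / 2 * (t * (1 - t)) * ⟪A (x - y), x - y⟫ := by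
    simp only [fq, map_add, map_smul, map_sub, inner_add_left, inner_add_right,
      inner_sub_left, inner_sub_right, real_inner_smul_left, real_inner_smul_right]
    rw [e2]
    ring
  have h0 : 0 ≤ 1 / 2 * (t * (1 - t)) * ⟪A (x - y), x - y⟫ := by
    have := hpsd (x - y)
    have ht1 : 0 ≤ t * (1 - t) := mul_nonneg ht.1 (by linarith [ht.2])
    positivity
  linarith [key, h0]

lemma ephi_ne_bot (hgbot : ∀ x, g x ≠ ⊥) (x : EuclideanSpace ℝ (Fin n)) :
    ephi A b α g x ≠ ⊥ := by
  unfold ephi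
  rw [Ne, EReal.add_eq_bot_iff]
  push_neg
  exact ⟨EReal.coe_ne_bot _, hgbot x⟩

lemma ephi_conv (hsym : ∀ x y, ⟪A x, y⟫ = ⟪x, A y⟫) (hpsd : ∀ x, 0 ≤ ⟪A x, x⟫)
    (hgbot : ∀ x, g x ≠ ⊥) (hgconv : EConvexOn g) : EConvexOn (ephi A b α g) := by
  intro x y t ht
  unfold ephi
  rw [ereal_smul_add_coe t _ ht.1 (hgbot x), ereal_smul_add_coe (1-t) _ (by linarith [ht.2]) (hgbot y)]
  have h1 : ((fq A b α (t • x + (1 - t) • y) : ℝ) : EReal)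
      ≤ ((t * fq A b α x + (1 - t) * fq A b α y : ℝ) : EReal) := by
    rw [EReal.coe_le_coe_iff]
    exact fq_convex A b α hsym hpsd x y t ht
  calc ((fq A b α (t • x + (1 - t) • y) : ℝ) : EReal) + g (t • x + (1 - t) • y)
      ≤ ((t * fq A b α x + (1 - t) * fq A b α y : ℝ) : EReal)
        + ((t : EReal) * g x + ((1 - t : ℝ) : EReal) * g y) :=
        add_le_add h1 (hgconv x y t ht)
    _ = ((t * fq A b α x : ℝ) : EReal) + (t : EReal) * g x
        + (((1 - t) * fq A b α y : ℝ) : EReal) + ((1 - t : ℝ) : EReal) * g y := by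
        rw [EReal.coe_add]; abel
    _ = _ := by abel

lemma ephi_lsc (hglsc : LowerSemicontinuous g) (hgbot : ∀ x, g x ≠ ⊥) :
    LowerSemicontinuous (ephi A b α g) := by
  have hfc : Continuous (fq A b α) := by
    unfold fq
    exact ((continuous_const.mul ((A.continuous).inner continuous_id)).add
      (continuous_const.inner continuous_id)).add continuous_const
  intro x c hc
  induction c using EReal.rec with
  | bot =>
    filter_upwards with y
    exact Ne.bot_lt (ephi_ne_bot A b α g hgbot y)
  | top => exact absurd hc (by simp)
  | coe r =>
    -- pick real d with r - fq x < d and (d:EReal) < g x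
    unfold ephi at hc
    have hgx_lb : ((r - fq A b α x : ℝ) : EReal) < g x := by
      by_cases htop : g x = ⊤
      · rw [htop]; exact EReal.coe_lt_top _
      · obtain ⟨u, hu⟩ := ereal_exists_real (hgbot x) htop
        rw [hu] at hc ⊢
        rw [← EReal.coe_add, gt_iff_lt, EReal.coe_lt_coe_iff] at hc
        rw [EReal.coe_lt_coe_iff]; linarith
    obtain ⟨d, hd1, hd2⟩ : ∃ d : ℝ, ((r - fq A b α x : ℝ) : EReal) < (d : EReal) ∧ (d:EReal) < g x := by
      by_cases htop : g x = ⊤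
      · exact ⟨r - fq A b α x + 1, by rw [EReal.coe_lt_coe_iff]; linarith, htop ▸ EReal.coe_lt_top _⟩
      · obtain ⟨u, hu⟩ := ereal_exists_real (hgbot x) htop
        rw [hu, EReal.coe_lt_coe_iff] at hgx_lb
        exact ⟨(r - fq A b α x + u)/2, by rw [EReal.coe_lt_coe_iff]; linarith,
          by rw [hu, EReal.coe_lt_coe_iff]; linarith⟩
    have hg_ev := hglsc x (d : EReal) hd2
    have hrd : r - d < fq A b α x := by
      rw [EReal.coe_lt_coe_iff] at hd1; linarith
    have hf_ev : ∀ᶠ y in 𝓝 x, r - d < fq A b α y :=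
      continuous_const.continuousAt.eventually_lt hfc.continuousAt hrd
    filter_upwards [hg_ev, hf_ev] with y hg1 hf1
    unfold ephi
    calc (r : EReal) = ((r - d : ℝ) : EReal) + (d : ℝ) := by rw [← EReal.coe_add]; norm_num
      _ < ((fq A b α y : ℝ) : EReal) + g y := by
          apply lt_of_lt_of_le (b := ((fq A b α y : ℝ) : EReal) + (d:ℝ))
          · rw [← EReal.coe_add, ← EReal.coe_add, EReal.coe_lt_coe_iff]; linarith
          · exact add_le_add_right hg1.le _

-- q basics
lemma qf_nonneg (hγ : 0 < γ)
    (hB : ∀ x : EuclideanSpace ℝ (Fin n), x ≠ 0 → 0 < ⟪x - γ • A x, x⟫)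
    (z : EuclideanSpace ℝ (Fin n)) : 0 ≤ qf A γ z := by
  obtain ⟨c, hc, hcq⟩ := posdef_const A γ hB
  have := hcq z
  have h2 : (0:ℝ) ≤ c * ‖z‖^2 := by positivity
  unfold qf
  have : 0 ≤ Sb A γ z z := le_trans h2 this
  positivity

lemma qf_neg_eq (z : EuclideanSpace ℝ (Fin n)) : qf A γ (-z) = qf A γ z := by
  unfold qf
  rw [show (-z : EuclideanSpace ℝ (Fin n)) = (-1 : ℝ) • z by simp, Sb_smul_left, Sb_smul_right]
  ring

lemma env_le_term (x y : EuclideanSpace ℝ (Fin n)) :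
    env A b α g γ x ≤ ((fq A b α y + qf A γ (y - x) : ℝ) : EReal) + g y := iInf_le _ y

lemma term_split (r s : ℝ) (a : EReal) :
    ((r + s : ℝ) : EReal) + a = (((r:ℝ):EReal) + a) + ((s:ℝ):EReal) := by
  rw [EReal.coe_add]; abel

lemma env_ge (hγ : 0 < γ)
    (hB : ∀ x : EuclideanSpace ℝ (Fin n), x ≠ 0 → 0 < ⟪x - γ • A x, x⟫)
    (rb : ℝ) (hlb : ∀ y, (rb : EReal) ≤ ephi A b α g y) (x : EuclideanSpace ℝ (Fin n)) :
    (rb : EReal) ≤ env A b α g γ x := by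
  refine le_iInf fun y => ?_
  rw [term_split]
  calc (rb : EReal) ≤ ephi A b α g y := hlb y
    _ ≤ _ := by
        refine le_add_of_nonneg_right ?_
        exact_mod_cast qf_nonneg A γ hγ hB (y - x)

lemma ereal_coe_add_eq_top {a : EReal} (r : ℝ) (h : (r:EReal) + a = ⊤) : a = ⊤ := by
  induction a using EReal.rec with
  | bot => simp at h
  | coe u => rw [← EReal.coe_add] at h; exact absurd h (EReal.coe_ne_top _)
  | top => rfl

lemma env_ne_top (hgtop : ∃ x, g x ≠ ⊤) (x : EuclideanSpace ℝ (Fin n)) :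
    env A b α g γ x ≠ ⊤ := by
  obtain ⟨y₀, hy₀⟩ := hgtop
  intro htop
  have h1 := env_le_term A b α g γ x y₀
  rw [htop, top_le_iff] at h1
  exact hy₀ (ereal_coe_add_eq_top _ h1)

noncomputable def envr (A : EuclideanSpace ℝ (Fin n) →L[ℝ] EuclideanSpace ℝ (Fin n))
    (b : EuclideanSpace ℝ (Fin n)) (α : ℝ) (g : EuclideanSpace ℝ (Fin n) → EReal) (γ : ℝ)
    (x : EuclideanSpace ℝ (Fin n)) : ℝ := (env A b α g γ x).toReal

lemma env_coe (hγ : 0 < γ)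
    (hB : ∀ x : EuclideanSpace ℝ (Fin n), x ≠ 0 → 0 < ⟪x - γ • A x, x⟫)
    (hgtop : ∃ x, g x ≠ ⊤) (rb : ℝ) (hlb : ∀ y, (rb : EReal) ≤ ephi A b α g y)
    (x : EuclideanSpace ℝ (Fin n)) :
    env A b α g γ x = ((envr A b α g γ x : ℝ) : EReal) := by
  have h1 := env_ge A b α g γ hγ hB rb hlb x
  have h2 := env_ne_top A b α g γ hgtop x
  have hbot : env A b α g γ x ≠ ⊥ := fun h => by rw [h] at h1; exact absurd h1 (by simp)
  exact (EReal.coe_toReal h2 hbot).symm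

lemma env_conv (hsym : ∀ x y, ⟪A x, y⟫ = ⟪x, A y⟫) (hpsd : ∀ x, 0 ≤ ⟪A x, x⟫)
    (hγ : 0 < γ) (hB : ∀ x : EuclideanSpace ℝ (Fin n), x ≠ 0 → 0 < ⟪x - γ • A x, x⟫)
    (hgbot : ∀ x, g x ≠ ⊥) (hgconv : EConvexOn g) (hgtop : ∃ x, g x ≠ ⊤)
    (rb : ℝ) (hlb : ∀ y, (rb : EReal) ≤ ephi A b α g y) :
    EConvexOn (env A b α g γ) := by
  intro x y t ht
  set xt := t • x + (1 - t) • y with hxt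
  rw [env_coe A b α g γ hγ hB hgtop rb hlb x, env_coe A b α g γ hγ hB hgtop rb hlb y,
    env_coe A b α g γ hγ hB hgtop rb hlb xt, ← EReal.coe_mul, ← EReal.coe_mul, ← EReal.coe_add,
    EReal.coe_le_coe_iff]
  set ex := envr A b α g γ x
  set ey := envr A b α g γ y
  refine le_of_forall_pos_le_add fun ε hε => ?_
  -- pick good w₁, w₂
  have hpick : ∀ u : EuclideanSpace ℝ (Fin n), ∃ w : EuclideanSpace ℝ (Fin n), ∃ G : ℝ,
      g w = (G : EReal) ∧ fq A b α w + qf A γ (w - u) + G < envr A b α g γ u + ε := by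
    intro u
    have hlt : env A b α g γ u < ((envr A b α g γ u + ε : ℝ) : EReal) := by
      rw [env_coe A b α g γ hγ hB hgtop rb hlb u, EReal.coe_lt_coe_iff]
      linarith
    obtain ⟨w, hw⟩ := iInf_lt_iff.1 hlt
    have hgw_top : g w ≠ ⊤ := by
      intro h
      rw [h, ereal_coe_add_top] at hw
      exact absurd hw (by simp)
    obtain ⟨G, hG⟩ := ereal_exists_real (hgbot w) hgw_top
    refine ⟨w, G, hG, ?_⟩
    rw [hG, ← EReal.coe_add, EReal.coe_lt_coe_iff] at hw
    linarith
  obtain ⟨w₁, G₁, hG₁, hw₁⟩ := hpick x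
  obtain ⟨w₂, G₂, hG₂, hw₂⟩ := hpick y
  set wt := t • w₁ + (1 - t) • w₂ with hwt
  have hq : qf A γ (wt - xt) ≤ t * qf A γ (w₁ - x) + (1 - t) * qf A γ (w₂ - y) := by
    have hid : wt - xt = t • (w₁ - x) + (1 - t) • (w₂ - y) := by rw [hwt, hxt]; module
    rw [hid]
    have := qf_comb A hsym γ t (w₁ - x) (w₂ - y)
    have hnn := qf_nonneg A γ hγ hB ((w₁ - x) - (w₂ - y))
    nlinarith [mul_nonneg ht.1 (by linarith [ht.2] : (0:ℝ) ≤ 1 - t)]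
  have hf : fq A b α wt ≤ t * fq A b α w₁ + (1 - t) * fq A b α w₂ :=
    fq_convex A b α hsym hpsd w₁ w₂ t ht
  have hgle : g wt ≤ ((t * G₁ + (1 - t) * G₂ : ℝ) : EReal) := by
    have := hgconv w₁ w₂ t ht
    rw [hG₁, hG₂, ← EReal.coe_mul, ← EReal.coe_mul, ← EReal.coe_add] at this
    exact this
  have hchain : env A b α g γ xt ≤ ((t * ex + (1 - t) * ey + ε : ℝ) : EReal) := by
    calc env A b α g γ xt ≤ ((fq A b α wt + qf A γ (wt - xt) : ℝ) : EReal) + g wt :=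
          env_le_term A b α g γ xt wt
      _ ≤ ((fq A b α wt + qf A γ (wt - xt) : ℝ) : EReal) + ((t * G₁ + (1 - t) * G₂ : ℝ) : EReal) :=
          add_le_add_right hgle _
      _ = ((fq A b α wt + qf A γ (wt - xt) + (t * G₁ + (1 - t) * G₂) : ℝ) : EReal) := by
          rw [← EReal.coe_add]
      _ ≤ _ := by
          rw [EReal.coe_le_coe_iff]
          nlinarith [mul_le_mul_of_nonneg_left hw₁.le ht.1,
            mul_le_mul_of_nonneg_left hw₂.le (by linarith [ht.2] : (0:ℝ) ≤ 1 - t)]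
  rw [env_coe A b α g γ hγ hB hgtop rb hlb xt, EReal.coe_le_coe_iff] at hchain
  exact hchain

lemma ereal_coe_add_ne_top {a : EReal} (r : ℝ) (ha : a ≠ ⊤) : (r:EReal) + a ≠ ⊤ :=
  fun h => ha (ereal_coe_add_eq_top r h)

lemma heart (hsym : ∀ x y, ⟪A x, y⟫ = ⟪x, A y⟫)
    (hγ : 0 < γ) (hB : ∀ x : EuclideanSpace ℝ (Fin n), x ≠ 0 → 0 < ⟪x - γ • A x, x⟫)
    (hgbot : ∀ x, g x ≠ ⊥) (hgtop : ∃ x, g x ≠ ⊤) (hglsc : LowerSemicontinuous g)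
    (rb : ℝ) (hlb : ∀ y, (rb : EReal) ≤ ephi A b α g y)
    (ζ : EuclideanSpace ℝ (Fin n) →L[ℝ] EuclideanSpace ℝ (Fin n))
    (hζ : ∀ v, (ζ v) - γ • A (ζ v) = γ • v) (v x : EuclideanSpace ℝ (Fin n)) :
    GMem (env A b α g γ) v x ↔ GMem (ephi A b α g) v (x - ζ v) := by
  have hγ' : γ ≠ 0 := hγ.ne'
  have hζS : ∀ w z, Sb A γ (ζ w) z = γ * ⟪w, z⟫ := by
    intro w z
    rw [← Sb_eval, hζ w]
    exact real_inner_smul_left w z γ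
  have F1 : ∀ z, qf A γ (z - ζ v) = qf A γ z - ⟪v, z⟫ + qf A γ (ζ v) := by
    intro z
    rw [qf_sub A hsym γ z (ζ v), hζS v z]
    field_simp
  have F2 : (⟪v, ζ v⟫ : ℝ) = 2 * qf A γ (ζ v) := by
    unfold qf
    rw [hζS v (ζ v)]
    field_simp
  have hphibot : ∀ u, ephi A b α g u ≠ ⊥ := ephi_ne_bot A b α g hgbot
  have envcoe : ∀ u, env A b α g γ u = ((envr A b α g γ u : ℝ) : EReal) :=
    env_coe A b α g γ hγ hB hgtop rb hlb
  have hEbot : ∀ u, env A b α g γ u ≠ ⊥ := fun u => by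
    rw [envcoe u]; exact EReal.coe_ne_bot _
  obtain ⟨y₀, hy₀⟩ := hgtop
  have hy₀top : ephi A b α g y₀ ≠ ⊤ := fun h => hy₀ (ereal_coe_add_eq_top _ h)
  set p := x - ζ v with hpdef
  have hxp : x = p + ζ v := by rw [hpdef]; abel
  obtain ⟨c₀, hc₀, hc₀q⟩ := posdef_const A γ hB
  set c' := c₀ / (2*γ) with hc'def
  have hc'pos : 0 < c' := by positivity
  have hcoerc : ∀ z, c' * ‖z‖^2 ≤ qf A γ z := by
    intro z
    unfold qf
    have h1 := mul_le_mul_of_nonneg_left (hc₀q z) (show (0:ℝ) ≤ 1/(2*γ) by positivity)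
    calc c' * ‖z‖^2 = 1/(2*γ) * (c₀ * ‖z‖^2) := by rw [hc'def]; ring
      _ ≤ _ := h1
  constructor
  ·
    intro he
    set X := envr A b α g γ x with hXdef
    set mφ := X - ⟪v,x⟫ + qf A γ (ζ v) with hmφ
    have ha : ∀ w, ((mφ + ⟪v,w⟫ : ℝ):EReal) ≤ ephi A b α g w := by
      intro w
      have h1 := env_le_term A b α g γ (w + ζ v) w
      have h2 : w - (w + ζ v) = -(ζ v) := by abel
      rw [term_split, h2, qf_neg_eq] at h1
      have h3 := he (w + ζ v)
      rw [envcoe x, envcoe (w + ζ v), ← EReal.coe_sub, ← EReal.coe_sub,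
        EReal.coe_le_coe_iff] at h3
      set E := envr A b α g γ (w + ζ v) with hEdef
      rw [envcoe (w + ζ v)] at h1
      have h4 : ((E - qf A γ (ζ v) : ℝ):EReal) ≤ ((fq A b α w : ℝ):EReal) + g w :=
        (ereal_coe_le_add_coe (hphibot w) _ _).1 h1
      have h5 : mφ + ⟪v,w⟫ ≤ E - qf A γ (ζ v) := by
        have hinner : (⟪v, w + ζ v⟫:ℝ) = ⟪v,w⟫ + 2*qf A γ (ζ v) := by
          rw [inner_add_right, F2]
        rw [hinner] at h3
        rw [hmφ]
        linarith
      exact le_trans (EReal.coe_le_coe_iff.2 h5) h4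
    intro y
    have hy : ((mφ:ℝ):EReal) ≤ ephi A b α g y - ((⟪v,y⟫:ℝ):EReal) :=
      (ereal_le_sub_iff (hphibot y) _ _).2 (ha y)
    have hple : ephi A b α g p ≤ ((mφ + ⟪v,p⟫ : ℝ):EReal) := by
      by_contra hgt
      push_neg at hgt
      obtain ⟨c, hc1, hc2⟩ : ∃ c:ℝ, mφ + ⟪v,p⟫ < c ∧ ((c:ℝ):EReal) < ephi A b α g p := by
        by_cases htop : ephi A b α g p = ⊤
        · exact ⟨mφ + ⟪v,p⟫ + 1, by linarith, by rw [htop]; exact EReal.coe_lt_top _⟩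
        · obtain ⟨u, hu⟩ := ereal_exists_real (hphibot p) htop
          rw [hu, EReal.coe_lt_coe_iff] at hgt
          exact ⟨(mφ + ⟪v,p⟫ + u)/2, by linarith, by rw [hu, EReal.coe_lt_coe_iff]; linarith⟩
      set ε₀ := (c - (mφ + ⟪v,p⟫))/2 with hε₀
      have hε₀pos : 0 < ε₀ := by rw [hε₀]; linarith
      have hev1 := (ephi_lsc A b α g hglsc hgbot) p _ hc2
      have hev2 : ∀ᶠ w in 𝓝 p, (⟪v,w⟫:ℝ) ∈ Metric.ball (⟪v,p⟫:ℝ) ε₀ := by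
        have hcont : Continuous fun w : EuclideanSpace ℝ (Fin n) => (⟪v,w⟫:ℝ) :=
          continuous_const.inner continuous_id
        exact hcont.continuousAt (Metric.ball_mem_nhds _ hε₀pos)
      obtain ⟨δ, hδpos, hδ⟩ := Metric.eventually_nhds_iff.1 (hev1.and hev2)
      have hminpos : 0 < min ε₀ (c' * δ^2) := lt_min hε₀pos (by positivity)
      set ε := (1/2) * min ε₀ (c' * δ^2) with hεdef
      have hεpos : 0 < ε := by rw [hεdef]; linarith
      have hlt : env A b α g γ x < ((X + ε:ℝ):EReal) := by
        rw [envcoe x, EReal.coe_lt_coe_iff]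
        show X < X + ε
        linarith
      obtain ⟨w, hw⟩ := iInf_lt_iff.1 hlt
      have hgw_top : g w ≠ ⊤ := fun h => by
        rw [h, ereal_coe_add_top] at hw; exact absurd hw (by simp)
      obtain ⟨G, hG⟩ := ereal_exists_real (hgbot w) hgw_top
      rw [hG, ← EReal.coe_add, EReal.coe_lt_coe_iff] at hw
      set Fw := fq A b α w + G with hFwdef
      have hephiw : ephi A b α g w = ((Fw:ℝ):EReal) := by
        unfold ephi; rw [hG, ← EReal.coe_add]
      have hq1 : qf A γ (w - x) = ⟪v,x⟫ - ⟪v,w⟫ + qf A γ (w - p) - qf A γ (ζ v) := by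
        have h5 := F1 (x - w)
        have h6 : x - w - ζ v = p - w := by rw [hpdef]; abel
        rw [h6, inner_sub_right] at h5
        have h7 : qf A γ (w - x) = qf A γ (x - w) := by
          rw [show w - x = -(x-w) from (neg_sub x w).symm, qf_neg_eq]
        have h8 : qf A γ (w - p) = qf A γ (p - w) := by
          rw [show w - p = -(p-w) from (neg_sub p w).symm, qf_neg_eq]
        rw [h7, h8]
        linarith
      have hafw : mφ + ⟪v,w⟫ ≤ Fw := by
        have := ha w
        rw [hephiw, EReal.coe_le_coe_iff] at this
        exact this
      have ht2 : c' * ‖w - p‖^2 ≤ qf A γ (w - p) := hcoerc _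
      have ht1t2 : (Fw - ⟪v,w⟫ - mφ) + qf A γ (w - p) < ε := by
        rw [hq1] at hw
        have h12 : mφ = X - ⟪v,x⟫ + qf A γ (ζ v) := hmφ
        have h13 : Fw = fq A b α w + G := hFwdef
        linarith
      have hqwp : qf A γ (w - p) < ε := by linarith
      have hwp : ‖w - p‖ < δ := by
        by_contra hge
        push_neg at hge
        have hsq : δ * δ ≤ ‖w - p‖ * ‖w - p‖ := mul_self_le_mul_self hδpos.le hge
        have h9 : c' * δ^2 ≤ c' * ‖w - p‖^2 := by nlinarith [hc'pos.le]
        have h10 : ε ≤ (1/2) * (c' * δ^2) := by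
          rw [hεdef]
          have := min_le_right ε₀ (c' * δ^2)
          linarith
        nlinarith
      obtain ⟨hb1, hb2⟩ := hδ (show dist w p < δ by rw [dist_eq_norm]; exact hwp)
      rw [hephiw, gt_iff_lt, EReal.coe_lt_coe_iff] at hb1
      rw [Metric.mem_ball, Real.dist_eq] at hb2
      have habs := abs_lt.1 hb2
      have h11 : ε ≤ (1/2) * ε₀ := by
        rw [hεdef]
        have := min_le_left ε₀ (c' * δ^2)
        linarith
      have ht1 : ε₀ < Fw - ⟪v,w⟫ - mφ := by
        have h14 : ε₀ = (c - (mφ + ⟪v,p⟫))/2 := hε₀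
        linarith [habs.1, habs.2]
      linarith [qf_nonneg A γ hγ hB (w - p)]
    have heq : ephi A b α g p = ((mφ + ⟪v,p⟫ : ℝ):EReal) := le_antisymm hple (ha p)
    rw [heq, ← EReal.coe_sub]
    have : (mφ + ⟪v,p⟫ - ⟪v,p⟫ : ℝ) = mφ := by ring
    rw [this]
    exact hy
  · -- GMem ephi → GMem env
    intro hp
    have hptop : ephi A b α g p ≠ ⊤ := by
      intro htop
      have h1 := hp y₀
      rw [htop, EReal.top_sub_coe, top_le_iff] at h1
      exact ereal_sub_coe_ne_top hy₀top _ h1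
    obtain ⟨P, hP⟩ := ereal_exists_real (hphibot p) hptop
    set m := P - ⟪v, p⟫ with hm
    have hlow : ∀ u, ((m - qf A γ (ζ v) + ⟪v, u⟫ : ℝ) : EReal) ≤ env A b α g γ u := by
      intro u
      refine le_iInf fun w => ?_
      have h2 : ((m + ⟪v, w⟫ : ℝ) : EReal) ≤ ephi A b α g w := by
        have h3 := hp w
        rw [hP, ← EReal.coe_sub] at h3
        exact (ereal_le_sub_iff (hphibot w) _ _).1 h3
      have h4 : ⟪v,u⟫ - ⟪v,w⟫ - qf A γ (ζ v) ≤ qf A γ (w - u) := by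
        have h5 := F1 (u - w)
        have h7 := qf_nonneg A γ hγ hB ((u - w) - ζ v)
        have h6 : qf A γ (w - u) = qf A γ (u - w) := by
          rw [show w - u = -(u-w) from (neg_sub u w).symm, qf_neg_eq]
        rw [inner_sub_right] at h5
        rw [h6]
        linarith
      calc ((m - qf A γ (ζ v) + ⟪v, u⟫ : ℝ) : EReal)
          ≤ ((m + ⟪v,w⟫ + qf A γ (w - u) : ℝ) : EReal) := by
            rw [EReal.coe_le_coe_iff]; linarith
        _ = ((m + ⟪v,w⟫ : ℝ) : EReal) + ((qf A γ (w - u) : ℝ) : EReal) := EReal.coe_add _ _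
        _ ≤ ephi A b α g w + ((qf A γ (w - u) : ℝ) : EReal) := add_le_add_left h2 _
        _ = ((fq A b α w + qf A γ (w - u) : ℝ) : EReal) + g w := by
            rw [term_split]; rfl
    have hup : env A b α g γ x ≤ ((P + qf A γ (ζ v) : ℝ) : EReal) := by
      have h1 := env_le_term A b α g γ x p
      rw [term_split] at h1
      have hpx : p - x = -(ζ v) := by rw [hpdef]; abel
      rw [hpx, qf_neg_eq] at h1
      rw [show ((fq A b α p:ℝ):EReal) + g p = ephi A b α g p from rfl, hP, ← EReal.coe_add] at h1
      exact h1
    intro y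
    have hxv : (⟪v, x⟫:ℝ) = ⟪v, p⟫ + 2 * qf A γ (ζ v) := by
      rw [hxp, inner_add_right, F2]
    have hEx : env A b α g γ x - ((⟪v,x⟫:ℝ):EReal) ≤ ((m - qf A γ (ζ v) : ℝ):EReal) := by
      rw [ereal_sub_le_iff]
      have : (m - qf A γ (ζ v) + ⟪v,x⟫ : ℝ) = P + qf A γ (ζ v) := by
        rw [hxv, hm]; ring
      rw [this]
      exact hup
    have hEy : ((m - qf A γ (ζ v) : ℝ):EReal) ≤ env A b α g γ y - ((⟪v,y⟫:ℝ):EReal) :=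
      (ereal_le_sub_iff (hEbot y) _ _).2 (hlow y)
    exact le_trans hEx hEy

end core

theorem globaltilt_transfer {n : ℕ} (ψ₁ ψ₂ : EuclideanSpace ℝ (Fin n) → EReal)
    (ζ : EuclideanSpace ℝ (Fin n) →L[ℝ] EuclideanSpace ℝ (Fin n))
    (corr : ∀ v x, GMem ψ₂ v x ↔ GMem ψ₁ v (x - ζ v)) (xbar : EuclideanSpace ℝ (Fin n))
    (h : ∃ κ > (0:ℝ), GlobalTilt ψ₁ xbar κ) : ∃ κ > (0:ℝ), GlobalTilt ψ₂ xbar κ := by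
  obtain ⟨κ, hκ, V, hV, M, hM0, hLip, hset⟩ := h
  refine ⟨κ + ‖ζ‖, add_pos_of_pos_of_nonneg hκ (norm_nonneg _), V, hV, fun v => M v + ζ v,
    by simp [hM0], ?_, ?_⟩
  · intro u hu v hv
    have h1 : M u + ζ u - (M v + ζ v) = (M u - M v) + (ζ u - ζ v) := by abel
    rw [h1]
    have h2 : ‖ζ u - ζ v‖ ≤ ‖ζ‖ * ‖u - v‖ := by
      have := ζ.le_opNorm (u - v); rwa [map_sub] at this
    calc ‖(M u - M v) + (ζ u - ζ v)‖ ≤ ‖M u - M v‖ + ‖ζ u - ζ v‖ := norm_add_le _ _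
      _ ≤ κ * ‖u - v‖ + ‖ζ‖ * ‖u - v‖ := add_le_add (hLip u hu v hv) h2
      _ = (κ + ‖ζ‖) * ‖u - v‖ := by ring
  · intro v hv
    ext z
    simp only [mem_setOf_eq, mem_singleton_iff]
    constructor
    · intro hz
      have h3 : z - ζ v ∈ {x | GMem ψ₁ v x} := (corr v z).1 hz
      rw [hset v hv] at h3
      exact sub_eq_iff_eq_add.1 h3
    · rintro rfl
      apply (corr v _).2
      have h5 : M v + ζ v - ζ v = M v := by abel
      rw [h5]
      have h6 : M v ∈ {x | GMem ψ₁ v x} := by rw [hset v hv]; rfl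
      exact h6

theorem tilt_iff_global {n : ℕ} (ψ : EuclideanSpace ℝ (Fin n) → EReal)
    (hbot : ∀ x, ψ x ≠ ⊥) (hconv : EConvexOn ψ) (xbar : EuclideanSpace ℝ (Fin n))
    (hfin : ψ xbar ≠ ⊤) :
    (∃ κ > (0:ℝ), TiltStableWith ψ xbar κ) ↔ (∃ κ > (0:ℝ), GlobalTilt ψ xbar κ) :=
  ⟨fun ⟨κ, hκ, h⟩ => ⟨κ, hκ, local_to_global ψ hbot hconv xbar hfin κ hκ h⟩,
   fun ⟨κ, hκ, h⟩ => ⟨κ, hκ, global_to_local ψ xbar κ hκ h⟩⟩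

/-- tilt stability of `φ` versus its FBE.
With `f(x) = ⟪Ax,x⟫/2 + ⟪b,x⟫ + α` (`A` symmetric positive-semidefinite), `g` proper,
lsc, convex, `φ = f + g`, `γ > 0` such that `B = I − γA` is positive-definite, and
`0 ∈ ∂φ(xbar)`: `xbar` is a tilt-stable local minimizer of `φ` iff it is a
tilt-stable local minimizer of `φ_γ`. -/
theorem stmt13 {n : ℕ}
    (A : EuclideanSpace ℝ (Fin n) →L[ℝ] EuclideanSpace ℝ (Fin n))
    (hsym : ∀ x y, ⟪A x, y⟫ = ⟪x, A y⟫)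
    (hpsd : ∀ x, 0 ≤ ⟪A x, x⟫)
    (b : EuclideanSpace ℝ (Fin n)) (α : ℝ)
    (g : EuclideanSpace ℝ (Fin n) → EReal)
    (hgbot : ∀ x, g x ≠ ⊥) (hgtop : ∃ x, g x ≠ ⊤)
    (hglsc : LowerSemicontinuous g) (hgconv : EConvexOn g)
    (γ : ℝ) (hγ : 0 < γ)
    (hB : ∀ x : EuclideanSpace ℝ (Fin n), x ≠ 0 → 0 < ⟪x - γ • A x, x⟫)
    (xbar : EuclideanSpace ℝ (Fin n))
    (hsub : (0 : EuclideanSpace ℝ (Fin n)) ∈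
      ESubdiff (fun x => ((1 / 2 * ⟪A x, x⟫ + ⟪b, x⟫ + α : ℝ) : EReal) + g x) xbar) :
    (∃ κ > (0 : ℝ), TiltStableWith
        (fun x => ((1 / 2 * ⟪A x, x⟫ + ⟪b, x⟫ + α : ℝ) : EReal) + g x) xbar κ) ↔
    (∃ κ > (0 : ℝ), TiltStableWith
        (fbEnvelope (fun z => 1 / 2 * ⟪A z, z⟫ + ⟪b, z⟫ + α) g γ) xbar κ) := by
  have hphi_eq : (fun x => ((1 / 2 * ⟪A x, x⟫ + ⟪b, x⟫ + α : ℝ) : EReal) + g x)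
      = ephi A b α g := rfl
  have henv_eq : fbEnvelope (fun z => 1 / 2 * ⟪A z, z⟫ + ⟪b, z⟫ + α) g γ = env A b α g γ :=
    fbEnvelope_eq_env A b α g γ hγ hsym
  rw [hphi_eq, henv_eq]
  obtain ⟨hxtop, hsub2⟩ := hsub
  rw [hphi_eq] at hxtop hsub2
  set rb := (ephi A b α g xbar).toReal with hrb
  have hxbot : ephi A b α g xbar ≠ ⊥ := ephi_ne_bot A b α g hgbot xbar
  have hxcoe : ephi A b α g xbar = (rb : EReal) := (EReal.coe_toReal hxtop hxbot).symm
  have hlb : ∀ y, (rb : EReal) ≤ ephi A b α g y := by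
    intro y
    have h1 := hsub2 y
    rw [show ((⟪(0 : EuclideanSpace ℝ (Fin n)), y - xbar⟫ : ℝ) : EReal) = (0 : EReal) by
      rw [inner_zero_left]; exact EReal.coe_zero, add_zero, hxcoe] at h1
    exact h1
  obtain ⟨ζ, hζ⟩ := exists_zeta A γ hB
  have hcorr : ∀ v x, GMem (env A b α g γ) v x ↔ GMem (ephi A b α g) v (x - ζ v) :=
    heart A b α g γ hsym hγ hB hgbot hgtop hglsc rb hlb ζ hζ
  have henvbot : ∀ u, env A b α g γ u ≠ ⊥ := fun u => by
    rw [env_coe A b α g γ hγ hB hgtop rb hlb u]; exact EReal.coe_ne_bot _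
  have henvtop : env A b α g γ xbar ≠ ⊤ := env_ne_top A b α g γ hgtop xbar
  have henvconv : EConvexOn (env A b α g γ) :=
    env_conv A b α g γ hsym hpsd hγ hB hgbot hgconv hgtop rb hlb
  have hphiconv : EConvexOn (ephi A b α g) := ephi_conv A b α g hsym hpsd hgbot hgconv
  have hphibot : ∀ u, ephi A b α g u ≠ ⊥ := ephi_ne_bot A b α g hgbot
  rw [tilt_iff_global (ephi A b α g) hphibot hphiconv xbar hxtop,
    tilt_iff_global (env A b α g γ) henvbot henvconv xbar henvtop]
  constructor
  · exact globaltilt_transfer (ephi A b α g) (env A b α g γ) ζ hcorr xbar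
  · apply globaltilt_transfer (env A b α g γ) (ephi A b α g) (-ζ)
    intro v x
    have h1 := hcorr v (x + ζ v)
    have h2 : x + ζ v - ζ v = x := by abel
    rw [h2] at h1
    have h3 : x - (-ζ) v = x + ζ v := by
      rw [ContinuousLinearMap.neg_apply, sub_neg_eq_add]
    rw [h3]
    exact h1.symm
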